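/- Let 1 ≤ d₁ < d₂ ≤ 2(q−1). For every monomial M ∈ A₁^{d₁}, the evaluation ev(M) belongs to PRM_{d₂}(q,2). -/
import Mathlib


open MvPolynomial

/-- The fixed representatives of the points of the projective plane over `F`:
the leftmost nonzero coordinate equals 1. -/
def stdRep (F : Type*) [Field F] : Set (Fin 3 → F) :=
  {v | v 0 = 1 ∨ (v 0 = 0 ∧ v 1 = 1) ∨ (v 0 = 0 ∧ v 1 = 0 ∧ v 2 = 1)}

/-- The evaluation map at the fixed representatives. -/
noncomputable def ev (F : Type*) [Field F] :
    MvPolynomial (Fin 3) F →ₗ[F] (stdRep F → F) :=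
  LinearMap.pi fun Q => (aeval (Q : Fin 3 → F)).toLinearMap

/-- The projective Reed–Muller code of degree `d` over the projective plane. -/
noncomputable def PRM (F : Type*) [Field F] (d : ℕ) : Submodule F (stdRep F → F) :=
  (homogeneousSubmodule (Fin 3) F d).map (ev F)

/-- The set of monomials `A₁^d`. -/
def A1 (F : Type*) [Field F] (q d : ℕ) : Set (MvPolynomial (Fin 3) F) :=
  {M | ∃ a0 a1 a2 : ℕ, 0 < a0 ∧ a0 + a1 + a2 = d ∧ a1 ≤ q - 1 ∧ a2 ≤ q - 1 ∧
    M = X 0 ^ a0 * X 1 ^ a1 * X 2 ^ a2}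

/-- Let `1 ≤ d₁ < d₂ ≤ 2(q−1)`. For every monomial `M ∈ A₁^{d₁}`,
`ev(M)` belongs to `PRM_{d₂}(q,2)`. -/
theorem stmt3 {F : Type*} [Field F] [Fintype F] (q d₁ d₂ : ℕ)
    (hq : Fintype.card F = q) (h1 : 1 ≤ d₁) (h12 : d₁ < d₂) (h2 : d₂ ≤ 2 * (q - 1)) :
    ∀ M ∈ A1 F q d₁, ev F M ∈ PRM F d₂ := by
  rintro M ⟨a0, a1, a2, ha0, hsum, -, -, rfl⟩
  refine ⟨X 0 ^ (a0 + (d₂ - d₁)) * X 1 ^ a1 * X 2 ^ a2, ?_, ?_⟩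
  · rw [SetLike.mem_coe, mem_homogeneousSubmodule]
    have h := (((isHomogeneous_X F (0 : Fin 3)).pow (a0 + (d₂ - d₁))).mul
      ((isHomogeneous_X F 1).pow a1)).mul ((isHomogeneous_X F 2).pow a2)
    simp only [one_mul] at h
    convert h using 2
    omega
  · funext Q
    obtain ⟨v, hv⟩ := Q
    simp only [ev, LinearMap.pi_apply, AlgHom.toLinearMap_apply, map_mul, map_pow, aeval_X]
    rcases hv with h | ⟨h, -⟩ | ⟨h, -⟩ <;> simp [h, ha0.ne', (by omega : a0 + (d₂ - d₁) ≠ 0)]
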